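/- Let (X, A, φ_X) be an inverse limit pro-C*-correspondence. Then the following are equivalent: (1) π_μ^A(J_X^λ) ∩ π_μ^A(X^{-1}(ker p_μ)) = {0} for all λ, μ ∈ Λ with μ ≤ λ; (2) π_{λμ}^A(J_{X_λ}) ⊂ J_{X_μ} for all λ, μ ∈ Λ with μ ≤ λ. -/

import Mathlib

/-!
Self-contained toolkit for formalizing the paper
"A construction of pro-C*-algebras from pro-C*-correspondences"
(M. Joiţa, I. Zarakas).

A pro-C*-algebra is encoded by an (upward directed) family of C*-seminorms
`p : Λ → Seminorm ℂ A` on a star `ℂ`-algebra, which is separating (Hausdorff)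
and complete (every filter that is Cauchy with respect to every seminorm
converges seminorm-wise).  All topological notions (closures, continuity of
maps, ...) are expressed directly through the seminorms.  The canonical
C*-algebra `A_λ = A / ker p_λ` is dealt with through the seminorm `p_λ`
itself or, where the quotient is genuinely needed, through abstract
"quotient presentation" data (`QuotPres`).  Universal objects (Katsura
algebras of C*-correspondences, the pro-C*-algebra `𝒪_X`, crossed products)
are encoded through their universal properties.
-/

noncomputable section

/-- A pro-C*-algebra structure on a star `ℂ`-algebra `A`: a family of
C*-seminorms indexed by a preordered set `Λ`, monotone in the index,
separating (Hausdorff) and (seminorm-wise) complete. -/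
structure ProCStar (Λ : Type) [Preorder Λ] (A : Type)
    [Ring A] [StarRing A] [Algebra ℂ A] where
  p : Λ → Seminorm ℂ A
  p_mul : ∀ (l : Λ) (a b : A), p l (a * b) ≤ p l a * p l b
  p_star : ∀ (l : Λ) (a : A), p l (star a) = p l a
  p_cstar : ∀ (l : Λ) (a : A), p l (star a * a) = p l a * p l a
  p_mono : ∀ {l m : Λ}, l ≤ m → ∀ a : A, p l a ≤ p m a
  separating : ∀ a : A, (∀ l, p l a = 0) → a = 0
  complete : ∀ F : Filter A, F.NeBot →
    (∀ (l : Λ) (ε : ℝ), 0 < ε → ∃ s ∈ F, ∀ x ∈ s, ∀ y ∈ s, p l (x - y) < ε) →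
    ∃ a : A, ∀ (l : Λ) (ε : ℝ), 0 < ε → ∃ s ∈ F, ∀ x ∈ s, p l (x - a) < ε

/-- Closure of a subset with respect to a family of seminorms. -/
def semiClosure {Λ E : Type} [AddCommGroup E] [Module ℂ E]
    (q : Λ → Seminorm ℂ E) (s : Set E) : Set E :=
  {x | ∀ (l : Λ) (ε : ℝ), 0 < ε → ∃ y ∈ s, q l (x - y) < ε}

/-- A closed two-sided star ideal of a pro-C*-algebra. -/
structure IsProClosedIdeal {Λ : Type} [Preorder Λ] {A : Type}
    [Ring A] [StarRing A] [Algebra ℂ A] (S : ProCStar Λ A) (I : Set A) : Prop where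
  zero_mem : (0 : A) ∈ I
  add_mem : ∀ {a b : A}, a ∈ I → b ∈ I → a + b ∈ I
  smul_mem : ∀ (c : ℂ) {a : A}, a ∈ I → c • a ∈ I
  mul_mem_left : ∀ (b : A) {a : A}, a ∈ I → b * a ∈ I
  mul_mem_right : ∀ (b : A) {a : A}, a ∈ I → a * b ∈ I
  star_mem : ∀ {a : A}, a ∈ I → star a ∈ I
  closed : semiClosure S.p I ⊆ I

/-- The kernel of the seminorm `p_λ`, i.e. the kernel of `π_λ^A : A → A_λ`. -/
def kerSeminorm {Λ : Type} [Preorder Λ] {A : Type} [Ring A] [StarRing A] [Algebra ℂ A]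
    (S : ProCStar Λ A) (l : Λ) : Set A :=
  {a : A | S.p l a = 0}

/-- A continuous star-algebra morphism between pro-C*-algebras
(continuity is expressed by domination of seminorms, which for star morphisms
between pro-C*-algebras is equivalent to topological continuity). -/
def IsProCStarHom {Λ₁ Λ₂ A₁ A₂ : Type} [Preorder Λ₁] [Preorder Λ₂]
    [Ring A₁] [StarRing A₁] [Algebra ℂ A₁] [Ring A₂] [StarRing A₂] [Algebra ℂ A₂]
    (S₁ : ProCStar Λ₁ A₁) (S₂ : ProCStar Λ₂ A₂) (f : A₁ → A₂) : Prop :=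
  (∀ a b, f (a + b) = f a + f b) ∧ (∀ (c : ℂ) (a : A₁), f (c • a) = c • f a) ∧
    (∀ a b, f (a * b) = f a * f b) ∧ (∀ a, f (star a) = star (f a)) ∧
    ∀ l₂ : Λ₂, ∃ l₁ : Λ₁, ∀ a, S₂.p l₂ (f a) ≤ S₁.p l₁ a

/-- An isomorphism of pro-C*-algebras. -/
def IsProCStarIso {Λ₁ Λ₂ A₁ A₂ : Type} [Preorder Λ₁] [Preorder Λ₂]
    [Ring A₁] [StarRing A₁] [Algebra ℂ A₁] [Ring A₂] [StarRing A₂] [Algebra ℂ A₂]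
    (S₁ : ProCStar Λ₁ A₁) (S₂ : ProCStar Λ₂ A₂) (f : A₁ → A₂) : Prop :=
  IsProCStarHom S₁ S₂ f ∧ ∃ g : A₂ → A₁, IsProCStarHom S₂ S₁ g ∧
    Function.LeftInverse g f ∧ Function.RightInverse g f

/-- A (right) Hilbert pro-C*-module over the pro-C*-algebra `(A, S)`:
a right `A`-module with an `A`-valued inner product, complete with respect
to the induced family of seminorms `q l x = (p l ⟨x,x⟩)^{1/2}`
(the seminorms are part of the data, linked to the inner product by `q_sq`). -/
structure HilbertMod {Λ : Type} [Preorder Λ] {A : Type} [Ring A] [StarRing A] [Algebra ℂ A]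
    (S : ProCStar Λ A) (X : Type) [AddCommGroup X] [Module ℂ X] where
  smul : X → A → X
  add_smul' : ∀ (x y : X) (a : A), smul (x + y) a = smul x a + smul y a
  smul_add' : ∀ (x : X) (a b : A), smul x (a + b) = smul x a + smul x b
  smul_mul' : ∀ (x : X) (a b : A), smul x (a * b) = smul (smul x a) b
  csmul_smul' : ∀ (c : ℂ) (x : X) (a : A), smul (c • x) a = c • smul x a
  smul_csmul' : ∀ (c : ℂ) (x : X) (a : A), smul x (c • a) = c • smul x a
  inner : X → X → A
  inner_add_right : ∀ x y z : X, inner x (y + z) = inner x y + inner x z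
  inner_smul_right : ∀ (x y : X) (a : A), inner x (smul y a) = inner x y * a
  inner_csmul_right : ∀ (c : ℂ) (x y : X), inner x (c • y) = c • inner x y
  inner_star : ∀ x y : X, star (inner x y) = inner y x
  inner_self_pos : ∀ x : X, ∃ b : A, inner x x = star b * b
  inner_self_eq_zero : ∀ x : X, inner x x = 0 → x = 0
  q : Λ → Seminorm ℂ X
  q_sq : ∀ (l : Λ) (x : X), q l x * q l x = S.p l (inner x x)
  complete : ∀ F : Filter X, F.NeBot →
    (∀ (l : Λ) (ε : ℝ), 0 < ε → ∃ s ∈ F, ∀ x ∈ s, ∀ y ∈ s, q l (x - y) < ε) →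
    ∃ x₀ : X, ∀ (l : Λ) (ε : ℝ), 0 < ε → ∃ s ∈ F, ∀ x ∈ s, q l (x - x₀) < ε

section Operators

variable {Λ : Type} [Preorder Λ] {A : Type} [Ring A] [StarRing A] [Algebra ℂ A]
  {S : ProCStar Λ A} {X : Type} [AddCommGroup X] [Module ℂ X]

/-- The operator seminorm `p_{λ, L_A(X)}(T) = sup { q_λ(Tx) : q_λ(x) ≤ 1 }`. -/
def opSemi (M : HilbertMod S X) (l : Λ) (T : X → X) : ℝ :=
  sSup ((fun x => M.q l (T x)) '' {x : X | M.q l x ≤ 1})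

/-- `Tst` is an adjoint of `T`. -/
def AdjointPairOn (M : HilbertMod S X) (T Tst : X → X) : Prop :=
  ∀ x y : X, M.inner (T x) y = M.inner x (Tst y)

/-- Membership in `L_A(X)`: an adjointable module morphism. -/
def IsAdjointableOn (M : HilbertMod S X) (T : X → X) : Prop :=
  (∀ x y : X, T (x + y) = T x + T y) ∧ (∀ (c : ℂ) (x : X), T (c • x) = c • T x) ∧
    (∀ (x : X) (a : A), T (M.smul x a) = M.smul (T x) a) ∧
    ∃ Tst : X → X, AdjointPairOn M T Tst

/-- The "rank one" operator `θ_{y,x}(z) = y⟨x,z⟩_A`. -/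
def thetaOp (M : HilbertMod S X) (y x : X) : X → X :=
  fun z => M.smul y (M.inner x z)

/-- `Θ(X)`, the linear span of the operators `θ_{y,x}`. -/
def thetaSpan (M : HilbertMod S X) : Submodule ℂ (X → X) :=
  Submodule.span ℂ {T : X → X | ∃ y x : X, T = thetaOp M y x}

/-- `π_λ^{L_A(X)}(T) ∈ K_{A_λ}(X_λ)`, expressed through the seminorm `p_{λ,L_A(X)}`:
`T` is approximable by elements of `Θ(X)` modulo the kernel of `p_{λ,L_A(X)}`. -/
def memKlevel (M : HilbertMod S X) (l : Λ) (T : X → X) : Prop :=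
  ∀ ε : ℝ, 0 < ε → ∃ k ∈ thetaSpan M, opSemi M l (T - k) < ε

/-- Membership in `K_A(X)`, the closure of `Θ(X)` in `L_A(X)`. -/
def memK (M : HilbertMod S X) (T : X → X) : Prop :=
  IsAdjointableOn M T ∧ ∀ l : Λ, memKlevel M l T

/-- `XI = span { x a : x ∈ X, a ∈ I }`. -/
def smulSet (M : HilbertMod S X) (I : Set A) : Submodule ℂ X :=
  Submodule.span ℂ {z : X | ∃ x : X, ∃ a ∈ I, z = M.smul x a}

end Operators

/-- A pro-C*-correspondence `(X, A, φ_X)`: a Hilbert pro-C*-module `X` over `A`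
together with a continuous star morphism `φ_X : A → L_A(X)`. -/
structure Corr {Λ : Type} [Preorder Λ] {A : Type} [Ring A] [StarRing A] [Algebra ℂ A]
    (S : ProCStar Λ A) {X : Type} [AddCommGroup X] [Module ℂ X] (M : HilbertMod S X) where
  phi : A → X → X
  phi_add : ∀ a b : A, phi (a + b) = phi a + phi b
  phi_csmul : ∀ (c : ℂ) (a : A), phi (c • a) = c • phi a
  phi_mul : ∀ (a b : A) (x : X), phi (a * b) x = phi a (phi b x)
  phi_adj : ∀ a : A, IsAdjointableOn M (phi a)
  phi_star : ∀ a : A, AdjointPairOn M (phi a) (phi (star a))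
  phi_cont : ∀ l : Λ, ∃ m : Λ, ∀ a : A, opSemi M l (phi a) ≤ S.p m a

section CorrDefs

variable {Λ : Type} [Preorder Λ] {A : Type} [Ring A] [StarRing A] [Algebra ℂ A]
  {S : ProCStar Λ A} {X : Type} [AddCommGroup X] [Module ℂ X] {M : HilbertMod S X}

/-- `X(I)`, the closed span of `{ ⟨y, φ_X(a) x⟩_A : a ∈ I, x, y ∈ X }`. -/
def XofIdeal (C : Corr S M) (I : Set A) : Set A :=
  semiClosure S.p
    ↑(Submodule.span ℂ {c : A | ∃ a ∈ I, ∃ x y : X, c = M.inner y (C.phi a x)})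

/-- `X⁻¹(I) = { a ∈ A : ⟨y, φ_X(a) x⟩_A ∈ I for all x, y ∈ X }`. -/
def XinvIdeal (C : Corr S M) (I : Set A) : Set A :=
  {a : A | ∀ x y : X, M.inner y (C.phi a x) ∈ I}

/-- The ideal `J_X^λ = { a : π_λ^{L_A(X)}(φ_X(a)) ∈ K_{A_λ}(X_λ) and
π_λ^A(ab) = 0 for every b ∈ ker (π_λ^{L_A(X)} ∘ φ_X) }`, all conditions being
expressed through the seminorms `p_λ` and `p_{λ,L_A(X)}`. -/
def Jlevel (C : Corr S M) (l : Λ) : Set A :=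
  {a : A | memKlevel M l (C.phi a) ∧
    ∀ b : A, opSemi M l (C.phi b) = 0 → S.p l (a * b) = 0}

/-- The ideal `𝒥_X = ⋂_λ J_X^λ`. -/
def JX (C : Corr S M) : Set A :=
  ⋂ l : Λ, Jlevel C l

/-- Katsura's ideal `J_X = φ_X⁻¹(K_A(X)) ∩ (ker φ_X)^⊥` of a C*-correspondence
(to be used when the index set is a singleton, i.e. for C*-algebras). -/
def KatsuraIdeal (C : Corr S M) : Set A :=
  {a : A | memK M (C.phi a) ∧ ∀ b : A, C.phi b = 0 → a * b = 0}

/-- `(X, A, φ_X)` is an inverse limit pro-C*-correspondence: `φ_X` is compatible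
with the Arens–Michael decompositions, i.e. `φ_X(ker p_λ) ⊆ ker π_λ^{L_A(X)}`
for every `λ`, so that `φ_X = lim_λ φ_{X_λ}`. -/
def IsInvLimCorr (C : Corr S M) : Prop :=
  ∀ (l : Λ) (a : A), S.p l a = 0 → opSemi M l (C.phi a) = 0

/-- An ideal `I` is positively invariant if `X(I) ⊆ I`. -/
def PosInvariant (C : Corr S M) (I : Set A) : Prop :=
  XofIdeal C I ⊆ I

/-- An ideal `I` is negatively invariant if
`π_μ^A(J_X^λ) ∩ π_μ^A(X⁻¹(I)) ⊆ π_μ^A(I)` for all `λ ≥ μ`: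
whenever `a ∈ J_X^λ` and `a' ∈ X⁻¹(I)` have the same image in `A_μ`, this
common image lies in `π_μ^A(I)`. -/
def NegInvariant (C : Corr S M) (I : Set A) : Prop :=
  ∀ (l m : Λ), m ≤ l → ∀ a ∈ Jlevel C l, ∀ a' ∈ XinvIdeal C I,
    S.p m (a - a') = 0 → ∃ i ∈ I, S.p m (a - i) = 0

/-- An invariant ideal: both positively and negatively invariant. -/
def InvariantIdeal (C : Corr S M) (I : Set A) : Prop :=
  PosInvariant C I ∧ NegInvariant C I

end CorrDefs

/-- A morphism `(Π, T)` between pro-C*-correspondences. -/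
structure CorrMor {Λ : Type} [Preorder Λ] {A : Type} [Ring A] [StarRing A] [Algebra ℂ A]
    {S : ProCStar Λ A} {X : Type} [AddCommGroup X] [Module ℂ X] {M : HilbertMod S X}
    (C : Corr S M)
    {Δ : Type} [Preorder Δ] {B : Type} [Ring B] [StarRing B] [Algebra ℂ B]
    {SB : ProCStar Δ B} {Y : Type} [AddCommGroup Y] [Module ℂ Y] {N : HilbertMod SB Y}
    (D : Corr SB N) where
  Pi : A → B
  Pi_add : ∀ a b : A, Pi (a + b) = Pi a + Pi b
  Pi_csmul : ∀ (c : ℂ) (a : A), Pi (c • a) = c • Pi a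
  Pi_mul : ∀ a b : A, Pi (a * b) = Pi a * Pi b
  Pi_star : ∀ a : A, Pi (star a) = star (Pi a)
  Pi_cont : ∀ d : Δ, ∃ l : Λ, ∀ a : A, SB.p d (Pi a) ≤ S.p l a
  T : X → Y
  T_inner : ∀ x₁ x₂ : X, N.inner (T x₁) (T x₂) = Pi (M.inner x₁ x₂)
  T_phi : ∀ (a : A) (x : X), D.phi (Pi a) (T x) = T (C.phi a x)

/-- A representation `(π, t)` of a pro-C*-correspondence `(X, A, φ_X)`
on a pro-C*-algebra `B`, i.e. a morphism into the identity correspondence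
`(B, B, id_B)`. -/
structure CorrRep {Λ : Type} [Preorder Λ] {A : Type} [Ring A] [StarRing A] [Algebra ℂ A]
    {S : ProCStar Λ A} {X : Type} [AddCommGroup X] [Module ℂ X] {M : HilbertMod S X}
    (C : Corr S M)
    {ΛB : Type} [Preorder ΛB] {B : Type} [Ring B] [StarRing B] [Algebra ℂ B]
    (SB : ProCStar ΛB B) where
  pi : A → B
  pi_add : ∀ a b : A, pi (a + b) = pi a + pi b
  pi_csmul : ∀ (c : ℂ) (a : A), pi (c • a) = c • pi a
  pi_mul : ∀ a b : A, pi (a * b) = pi a * pi b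
  pi_star : ∀ a : A, pi (star a) = star (pi a)
  pi_cont : ∀ d : ΛB, ∃ l : Λ, ∀ a : A, SB.p d (pi a) ≤ S.p l a
  t : X → B
  t_add : ∀ x y : X, t (x + y) = t x + t y
  t_csmul : ∀ (c : ℂ) (x : X), t (c • x) = c • t x
  t_inner : ∀ x y : X, star (t x) * t y = pi (M.inner x y)
  t_phi : ∀ (a : A) (x : X), t (C.phi a x) = pi a * t x

/-- Covariance of a representation `(π, t)`: `ψ_t(φ_X(a)) = π(a)` for every
`a ∈ 𝒥_X`, expressed through simultaneous approximation: there is a net of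
finite "rank one" sums `∑ θ_{y_i, x_i}` converging to `φ_X(a)` in `L_A(X)`
whose images `∑ t(y_i) t(x_i)*` converge to `π(a)` in `B`. -/
def IsCovariantRep {Λ : Type} [Preorder Λ] {A : Type} [Ring A] [StarRing A] [Algebra ℂ A]
    {S : ProCStar Λ A} {X : Type} [AddCommGroup X] [Module ℂ X] {M : HilbertMod S X}
    {C : Corr S M}
    {ΛB : Type} [Preorder ΛB] {B : Type} [Ring B] [StarRing B] [Algebra ℂ B]
    {SB : ProCStar ΛB B} (R : CorrRep C SB) : Prop :=
  ∀ a ∈ JX C, ∃ (ι : Type) (F : Filter ι), F.NeBot ∧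
    ∃ (n : ι → ℕ) (xs ys : (j : ι) → Fin (n j) → X),
      (∀ l : Λ, Filter.Tendsto
        (fun j => opSemi M l (C.phi a - ∑ i, thetaOp M (ys j i) (xs j i))) F (nhds 0)) ∧
      (∀ d : ΛB, Filter.Tendsto
        (fun j => SB.p d (R.pi a - ∑ i, R.t (ys j i) * star (R.t (xs j i)))) F (nhds 0))

/-- The pro-C*-algebra `𝒪_X` associated to a pro-C*-correspondence, presented
by a universal covariant representation `(π_X, t_X)` whose images generate it. -/
structure UniversalCovRep {Λ : Type} [Preorder Λ] {A : Type} [Ring A] [StarRing A] [Algebra ℂ A]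
    {S : ProCStar Λ A} {X : Type} [AddCommGroup X] [Module ℂ X] {M : HilbertMod S X}
    (C : Corr S M)
    {ΛO : Type} [Preorder ΛO] {O : Type} [Ring O] [StarRing O] [Algebra ℂ O] [StarModule ℂ O]
    (SO : ProCStar ΛO O) where
  rep : CorrRep C SO
  covariant : IsCovariantRep rep
  generates : ∀ o : O, o ∈ semiClosure SO.p
    ↑(NonUnitalStarAlgebra.adjoin ℂ (Set.range rep.pi ∪ Set.range rep.t))
  universal : ∀ {ΛB : Type} [Preorder ΛB] {B : Type} [Ring B] [StarRing B] [Algebra ℂ B]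
    (SB : ProCStar ΛB B) (R : CorrRep C SB), IsCovariantRep R →
    ∃! Φ : O → B, IsProCStarHom SO SB Φ ∧
      (∀ a, Φ (rep.pi a) = R.pi a) ∧ (∀ x, Φ (rep.t x) = R.t x)

/-- A presentation of the quotient C*-correspondence
`(X_λ, A_λ, φ_{X_λ})` of `(X, A, φ_X)` at level `λ`: a C*-algebra `(B, SB)`
(a pro-C*-algebra over a singleton index set) which is a quotient of `A` by
`ker p_λ`, a Hilbert C*-module `N` over it which is a quotient of `X` by
`ker p_λ^A`, and the induced correspondence `D`. -/
structure QuotPres {Λ : Type} [Preorder Λ] {A : Type} [Ring A] [StarRing A] [Algebra ℂ A]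
    {S : ProCStar Λ A} {X : Type} [AddCommGroup X] [Module ℂ X] {M : HilbertMod S X}
    (C : Corr S M) (l : Λ)
    {B : Type} [Ring B] [StarRing B] [Algebra ℂ B] (SB : ProCStar PUnit B)
    {Y : Type} [AddCommGroup Y] [Module ℂ Y] (N : HilbertMod SB Y) (D : Corr SB N)
    (piq : A → B) (sig : X → Y) : Prop where
  piq_add : ∀ a b : A, piq (a + b) = piq a + piq b
  piq_csmul : ∀ (c : ℂ) (a : A), piq (c • a) = c • piq a
  piq_mul : ∀ a b : A, piq (a * b) = piq a * piq b
  piq_star : ∀ a : A, piq (star a) = star (piq a)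
  piq_surj : Function.Surjective piq
  piq_norm : ∀ a : A, SB.p PUnit.unit (piq a) = S.p l a
  sig_add : ∀ x y : X, sig (x + y) = sig x + sig y
  sig_csmul : ∀ (c : ℂ) (x : X), sig (c • x) = c • sig x
  sig_surj : Function.Surjective sig
  sig_smul : ∀ (x : X) (a : A), sig (M.smul x a) = N.smul (sig x) (piq a)
  sig_inner : ∀ x y : X, N.inner (sig x) (sig y) = piq (M.inner x y)
  phi_comm : ∀ (a : A) (x : X), D.phi (piq a) (sig x) = sig (C.phi a x)

/-- Katsura's C*-algebra `𝒪_{X_ω}` associated to a `𝒯`-pair `ω = ({0}, I')` of a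
C*-correspondence, presented through a representation `(π_ω, t_ω)` whose
associated `𝒯`-pair is `ω`, whose images generate the algebra, and which is
universal among representations `(π, t)` with `ω ⊆ ω_{(π,t)}` (Katsura's
Theorem 7.1). -/
structure TPairAlg {B : Type} [Ring B] [StarRing B] [Algebra ℂ B] {SB : ProCStar PUnit B}
    {Y : Type} [AddCommGroup Y] [Module ℂ Y] {N : HilbertMod SB Y} (D : Corr SB N)
    (I' : Set B)
    {O : Type} [Ring O] [StarRing O] [Algebra ℂ O] [StarModule ℂ O]
    (SO : ProCStar PUnit O) where
  rep : CorrRep D SO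
  ker_pi : ∀ b : B, rep.pi b = 0 → b = 0
  tpair_snd : ∀ b : B, b ∈ I' ↔ rep.pi b ∈ semiClosure SO.p
    ↑(Submodule.span ℂ {z : O | ∃ x y : Y, z = rep.t x * star (rep.t y)})
  generates : ∀ o : O, o ∈ semiClosure SO.p
    ↑(NonUnitalStarAlgebra.adjoin ℂ (Set.range rep.pi ∪ Set.range rep.t))
  universal : ∀ {ΛB : Type} [Preorder ΛB] {B' : Type} [Ring B'] [StarRing B'] [Algebra ℂ B']
    (SB' : ProCStar ΛB B') (R : CorrRep D SB'),
    (∀ b ∈ I', R.pi b ∈ semiClosure SB'.p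
      ↑(Submodule.span ℂ {z : B' | ∃ x y : Y, z = R.t x * star (R.t y)})) →
    ∃! Φ : O → B', IsProCStarHom SO SB' Φ ∧
      (∀ b, Φ (rep.pi b) = R.pi b) ∧ (∀ x, Φ (rep.t x) = R.t x)

/-- A Hilbert `A`–`A` pro-C*-bimodule: a right Hilbert pro-C*-module which is
also a left Hilbert pro-C*-module, with `_A⟨x,y⟩ z = x ⟨y,z⟩_A` and the
compatibility of the respective families of seminorms. -/
structure HilbertBimod {Λ : Type} [Preorder Λ] {A : Type} [Ring A] [StarRing A] [Algebra ℂ A]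
    (S : ProCStar Λ A) (X : Type) [AddCommGroup X] [Module ℂ X]
    extends HilbertMod S X where
  lsmul : A → X → X
  lsmul_add' : ∀ (a : A) (x y : X), lsmul a (x + y) = lsmul a x + lsmul a y
  add_lsmul' : ∀ (a b : A) (x : X), lsmul (a + b) x = lsmul a x + lsmul b x
  lsmul_mul' : ∀ (a b : A) (x : X), lsmul (a * b) x = lsmul a (lsmul b x)
  lsmul_csmul' : ∀ (c : ℂ) (a : A) (x : X), lsmul a (c • x) = c • lsmul a x
  csmul_lsmul' : ∀ (c : ℂ) (a : A) (x : X), lsmul (c • a) x = c • lsmul a x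
  lsmul_smul' : ∀ (a : A) (x : X) (b : A), lsmul a (smul x b) = smul (lsmul a x) b
  linner : X → X → A
  linner_add_left : ∀ x y z : X, linner (x + z) y = linner x y + linner z y
  linner_lsmul_left : ∀ (a : A) (x y : X), linner (lsmul a x) y = a * linner x y
  linner_csmul_left : ∀ (c : ℂ) (x y : X), linner (c • x) y = c • linner x y
  linner_star : ∀ x y : X, star (linner x y) = linner y x
  linner_self_pos : ∀ x : X, ∃ b : A, linner x x = star b * b
  linner_self_eq_zero : ∀ x : X, linner x x = 0 → x = 0
  bimodule_rel : ∀ x y z : X, lsmul (linner x y) z = smul x (inner y z)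
  lq : Λ → Seminorm ℂ X
  lq_sq : ∀ (l : Λ) (x : X), lq l x * lq l x = S.p l (linner x x)
  q_lsmul : ∀ (l : Λ) (a : A) (x : X), q l (lsmul a x) ≤ S.p l a * q l x
  lq_smul : ∀ (l : Λ) (x : X) (a : A), lq l (smul x a) ≤ S.p l a * lq l x

/-- The closed ideal `_AI`, the closed span of `{ _A⟨x,y⟩ : x, y ∈ X }`. -/
def leftIdealSet {Λ : Type} [Preorder Λ] {A : Type} [Ring A] [StarRing A] [Algebra ℂ A]
    {S : ProCStar Λ A} {X : Type} [AddCommGroup X] [Module ℂ X]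
    (W : HilbertBimod S X) : Set A :=
  semiClosure S.p ↑(Submodule.span ℂ {a : A | ∃ x y : X, a = W.linner x y})

/-- A covariant representation `(φ_X, φ_A)` of a Hilbert `A`–`A`
pro-C*-bimodule on a pro-C*-algebra `B` (Joiţa–Zarakas, Definition 3.1). -/
structure BimodCovRep {Λ : Type} [Preorder Λ] {A : Type} [Ring A] [StarRing A] [Algebra ℂ A]
    {S : ProCStar Λ A} {X : Type} [AddCommGroup X] [Module ℂ X] (W : HilbertBimod S X)
    {ΛB : Type} [Preorder ΛB] {B : Type} [Ring B] [StarRing B] [Algebra ℂ B]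
    (SB : ProCStar ΛB B) where
  phiA : A → B
  phiA_add : ∀ a b : A, phiA (a + b) = phiA a + phiA b
  phiA_csmul : ∀ (c : ℂ) (a : A), phiA (c • a) = c • phiA a
  phiA_mul : ∀ a b : A, phiA (a * b) = phiA a * phiA b
  phiA_star : ∀ a : A, phiA (star a) = star (phiA a)
  phiA_cont : ∀ d : ΛB, ∃ l : Λ, ∀ a : A, SB.p d (phiA a) ≤ S.p l a
  phiX : X → B
  cov_smul : ∀ (x : X) (a : A), phiX (W.smul x a) = phiX x * phiA a
  cov_lsmul : ∀ (a : A) (x : X), phiX (W.lsmul a x) = phiA a * phiX x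
  cov_inner : ∀ x y : X, star (phiX x) * phiX y = phiA (W.inner x y)
  cov_linner : ∀ x y : X, phiX x * star (phiX y) = phiA (W.linner x y)

/-- The crossed product `A ×_X ℤ` of `A` by a Hilbert `A`–`A` pro-C*-bimodule
`X` (Joiţa–Zarakas, Definition 3.3): a pro-C*-algebra with a covariant
representation `(i_X, i_A)` through which every covariant representation
factors uniquely. -/
structure CrossedProdBimod {Λ : Type} [Preorder Λ] {A : Type} [Ring A] [StarRing A] [Algebra ℂ A]
    {S : ProCStar Λ A} {X : Type} [AddCommGroup X] [Module ℂ X] (W : HilbertBimod S X)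
    {ΛO : Type} [Preorder ΛO] {O : Type} [Ring O] [StarRing O] [Algebra ℂ O]
    (SO : ProCStar ΛO O) where
  iRep : BimodCovRep W SO
  universal : ∀ {ΛB : Type} [Preorder ΛB] {B : Type} [Ring B] [StarRing B] [Algebra ℂ B]
    (SB : ProCStar ΛB B) (R : BimodCovRep W SB),
    ∃! Φ : O → B, IsProCStarHom SO SB Φ ∧
      (∀ x, Φ (iRep.phiX x) = R.phiX x) ∧ (∀ a, Φ (iRep.phiA a) = R.phiA a)

/-- A nondegenerate covariant representation `(u, φ)` of the pro-C*-dynamical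
system `(A, α, ℤ)` (with action `n ↦ αⁿ = αz n`) on a pro-C*-algebra `B`. -/
structure DynCovRep {Λ : Type} [Preorder Λ] {A : Type} [Ring A] [StarRing A] [Algebra ℂ A]
    (S : ProCStar Λ A) (αz : ℤ → A → A)
    {ΛB : Type} [Preorder ΛB] {B : Type} [Ring B] [StarRing B] [Algebra ℂ B]
    (SB : ProCStar ΛB B) where
  phi : A → B
  phi_add : ∀ a b : A, phi (a + b) = phi a + phi b
  phi_csmul : ∀ (c : ℂ) (a : A), phi (c • a) = c • phi a
  phi_mul : ∀ a b : A, phi (a * b) = phi a * phi b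
  phi_star : ∀ a : A, phi (star a) = star (phi a)
  phi_cont : ∀ d : ΛB, ∃ l : Λ, ∀ a : A, SB.p d (phi a) ≤ S.p l a
  u : ℤ → B
  u_zero : u 0 = 1
  u_add : ∀ m n : ℤ, u (m + n) = u m * u n
  u_star : ∀ n : ℤ, star (u n) = u (-n)
  cov : ∀ (n : ℤ) (a : A), u n * phi a = phi (αz n a) * u n
  nondeg : ∀ b : B, b ∈ semiClosure SB.p
    ↑(Submodule.span ℂ {z : B | ∃ (a : A) (b' : B), z = phi a * b'})

/-- The crossed product `A ×_α ℤ`: the universal pro-C*-algebra with respect to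
nondegenerate covariant representations of `(A, α, ℤ)`. -/
structure CrossedProdDyn {Λ : Type} [Preorder Λ] {A : Type} [Ring A] [StarRing A] [Algebra ℂ A]
    (S : ProCStar Λ A) (αz : ℤ → A → A)
    {ΛO : Type} [Preorder ΛO] {O : Type} [Ring O] [StarRing O] [Algebra ℂ O]
    (SO : ProCStar ΛO O) where
  iRep : DynCovRep S αz SO
  universal : ∀ {ΛB : Type} [Preorder ΛB] {B : Type} [Ring B] [StarRing B] [Algebra ℂ B]
    (SB : ProCStar ΛB B) (R : DynCovRep S αz SB),
    ∃! Φ : O → B, IsProCStarHom SO SB Φ ∧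
      (∀ a, Φ (iRep.phi a) = R.phi a) ∧ (∀ n, Φ (iRep.u n) = R.u n)

end

/-!
Both conditions are statements about the quotient C*-correspondences `(X_λ, A_λ, φ_{X_λ})`:
`π_λ` maps `J_X^λ` onto Katsura's ideal `J_{X_λ}`, and `X⁻¹(ker p_μ)` onto `ker φ_{X_μ}`.
The one analytic input is that compactness of `φ_X(a)` at level `λ` persists at every level
`μ ≤ λ`. This needs `p_{μ,L_A(X)} ≤ 8 p_{λ,L_A(X)}` on adjointable operators, which follows
from a spectral radius argument: for self-adjoint `S`, `q_μ(S x)² ≤ 4 q_μ(S² x)` when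
`q_μ(x) ≤ 1`, and iterating compares `q_μ(S x)` with `q_λ(S^{2ⁿ} x)^{2⁻ⁿ}`. Boundedness of
adjointable operators at level `λ` comes from uniform boundedness on the Hilbert C*-module
`X_λ`.

(1) ⇒ (2): if `a ∈ J_X^λ` and `φ_{X_μ}(π_μ b) = 0`, then `ab` lies in both
`J_X^λ` and `X⁻¹(ker p_μ)`, so `π_μ(ab) = 0`.
(2) ⇒ (1): an element of `J_{X_μ} ∩ ker φ_{X_μ}` satisfies `a a* = 0`, so it is zero.
-/

theorem Seminorm.apply_ofReal_smul {E : Type*} [AddCommGroup E] [Module ℂ E]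
    (q : Seminorm ℂ E) {r : ℝ} (hr : 0 ≤ r) (x : E) : q ((r : ℂ) • x) = r * q x := by
  rw [map_smul_eq_mul, Complex.norm_real, Real.norm_of_nonneg hr]

theorem Seminorm.apply_inv_smul_self {E : Type*} [AddCommGroup E] [Module ℂ E]
    (q : Seminorm ℂ E) {x : E} (hx : q x ≠ 0) : q ((((q x)⁻¹ : ℝ) : ℂ) • x) = 1 := by
  rw [q.apply_ofReal_smul (inv_nonneg.2 (apply_nonneg q x)), inv_mul_cancel₀ hx]

theorem apply_iterate_le_pow_mul {E : Type*} {q : E → ℝ} {f : E → E} {c : ℝ} (hc : 0 ≤ c)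
    (hf : ∀ z, q (f z) ≤ c * q z) (n : ℕ) (x : E) : q (f^[n] x) ≤ c ^ n * q x := by
  induction n with
  | zero => simp
  | succ n ih =>
    rw [Function.iterate_succ_apply', pow_succ', mul_assoc]
    exact (hf _).trans (mul_le_mul_of_nonneg_left ih hc)

theorem le_of_forall_pow_two_pow_le {u c Q : ℝ} (hc : 0 ≤ c)
    (h : ∀ n : ℕ, u ^ 2 ^ n ≤ c ^ 2 ^ n * Q) : u ≤ c := by
  by_contra! hcu
  rcases hc.eq_or_lt with rfl | hc
  · have h0 := h 0
    simp only [pow_zero, pow_one, zero_mul] at h0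
    linarith
  · have h1 : 1 < u / c := (one_lt_div hc).2 hcu
    obtain ⟨n, hn⟩ := pow_unbounded_of_one_lt Q h1
    have h2 : (u / c) ^ n ≤ (u / c) ^ 2 ^ n := pow_le_pow_right₀ h1.le Nat.lt_two_pow_self.le
    have h3 : (u / c) ^ 2 ^ n ≤ Q := by
      rw [div_pow, div_le_iff₀ (pow_pos hc _), mul_comm]
      exact h n
    linarith

namespace HilbertMod

variable {Λ : Type} [Preorder Λ] {A : Type} [Ring A] [StarRing A] [Algebra ℂ A]
  {S : ProCStar Λ A} {X : Type} [AddCommGroup X] [Module ℂ X] (M : HilbertMod S X)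

theorem inner_zero_right (x : X) : M.inner x 0 = 0 :=
  map_zero (AddMonoidHom.mk' (M.inner x) (M.inner_add_right x))

theorem inner_sub_right (x y z : X) : M.inner x (y - z) = M.inner x y - M.inner x z :=
  map_sub (AddMonoidHom.mk' (M.inner x) (M.inner_add_right x)) y z

theorem inner_zero_left (y : X) : M.inner 0 y = 0 := by
  rw [← M.inner_star, M.inner_zero_right, star_zero]

theorem inner_add_left (x y z : X) : M.inner (x + y) z = M.inner x z + M.inner y z := by
  rw [← M.inner_star, M.inner_add_right, star_add, M.inner_star, M.inner_star]

theorem inner_sub_left (x y z : X) : M.inner (x - y) z = M.inner x z - M.inner y z := by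
  rw [← M.inner_star, M.inner_sub_right, star_sub, M.inner_star, M.inner_star]

theorem p_inner_comm (l : Λ) (x y : X) : S.p l (M.inner x y) = S.p l (M.inner y x) := by
  rw [← M.inner_star x y, S.p_star]

theorem p_inner_smul_left (l : Λ) (c : ℂ) (x y : X) :
    S.p l (M.inner (c • x) y) = ‖c‖ * S.p l (M.inner x y) := by
  rw [M.p_inner_comm, M.inner_csmul_right, map_smul_eq_mul, M.p_inner_comm]

theorem q_eq_of_inner_self_eq {x : X} {b : A} (h : M.inner x x = star b * b) (l : Λ) :
    M.q l x = S.p l b := by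
  rw [← mul_self_inj (apply_nonneg _ _) (apply_nonneg _ _), M.q_sq, h, S.p_cstar]

theorem q_smul_le (l : Λ) (x : X) (a : A) : M.q l (M.smul x a) ≤ M.q l x * S.p l a := by
  obtain ⟨b, hb⟩ := M.inner_self_pos x
  have hxa : M.inner (M.smul x a) (M.smul x a) = star (b * a) * (b * a) := by
    rw [M.inner_smul_right, ← M.inner_star, M.inner_smul_right, hb]
    simp only [star_mul, star_star, mul_assoc]
  rw [M.q_eq_of_inner_self_eq hxa, M.q_eq_of_inner_self_eq hb]
  exact S.p_mul l b a

theorem p_inner_add_inner_le (l : Λ) (x y : X) :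
    S.p l (M.inner x y + M.inner y x) ≤
      (M.q l x + M.q l y) ^ 2 + M.q l x ^ 2 + M.q l y ^ 2 := by
  have hsum : M.inner x y + M.inner y x =
      M.inner (x + y) (x + y) - M.inner x x - M.inner y y := by
    rw [M.inner_add_right, M.inner_add_left, M.inner_add_left]
    abel
  have hsq : ∀ z, S.p l (M.inner z z) = M.q l z ^ 2 := fun z => by rw [sq, M.q_sq]
  calc S.p l (M.inner x y + M.inner y x)
      ≤ S.p l (M.inner (x + y) (x + y)) + S.p l (M.inner x x) + S.p l (M.inner y y) := by
        rw [hsum]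
        exact (map_sub_le_add _ _ _).trans (by gcongr; exact map_sub_le_add _ _ _)
    _ ≤ _ := by
        rw [hsq, hsq, hsq]
        gcongr
        exact map_add_le_add _ _ _

theorem p_inner_le_of_q_le_half (l : Λ) {x : X} (hx : M.q l x ≤ 1 / 2) (y : X) :
    S.p l (M.inner x y) ≤ 2 * M.q l y := by
  set a := M.inner x y
  -- polarization applied to `y` and `w = x ⟨x, y⟩`, for which `⟨y, w⟩ = a* a`
  set w := M.smul x a
  have hyw : M.inner y w = star a * a := by rw [M.inner_smul_right, ← M.inner_star]
  have hwy : M.inner w y = star a * a := by rw [← M.inner_star, hyw, star_mul, star_star]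
  have hpol : S.p l (M.inner y w + M.inner w y) = 2 * S.p l a ^ 2 := by
    rw [hyw, hwy, ← two_smul ℂ, map_smul_eq_mul, S.p_cstar]
    norm_num
    ring
  have hw : M.q l w ≤ S.p l a / 2 :=
    (M.q_smul_le l x a).trans (by nlinarith [apply_nonneg (S.p l) a])
  have h := M.p_inner_add_inner_le l y w
  have hqw := apply_nonneg (M.q l) w
  have hqy := apply_nonneg (M.q l) y
  nlinarith [mul_le_mul hw hw hqw (by linarith), apply_nonneg (S.p l) a]

/-- Cauchy–Schwarz inequality, with the constant `4` coming from polarization. -/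
theorem p_inner_le (l : Λ) (x y : X) : S.p l (M.inner x y) ≤ 4 * M.q l x * M.q l y := by
  have hscale : ∀ r : ℝ, 0 < r → 2 * M.q l x ≤ r →
      S.p l (M.inner x y) ≤ 2 * r * M.q l y := by
    intro r hr hxr
    have h := M.p_inner_le_of_q_le_half l (x := ((r⁻¹ : ℝ) : ℂ) • x) (by
      rw [(M.q l).apply_ofReal_smul (inv_nonneg.2 hr.le), inv_mul_le_iff₀ hr]
      linarith) y
    rw [M.p_inner_smul_left, Complex.norm_real, Real.norm_of_nonneg (inv_nonneg.2 hr.le),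
      inv_mul_le_iff₀ hr] at h
    linarith
  have hqy := apply_nonneg (M.q l) y
  refine le_of_forall_pos_le_add fun ε hε => ?_
  have hδ : ε / (2 * M.q l y + 1) * (2 * M.q l y + 1) = ε := div_mul_cancel₀ _ (by positivity)
  have hδ0 : 0 < ε / (2 * M.q l y + 1) := by positivity
  have h := hscale _ (by positivity : 0 < 2 * M.q l x + ε / (2 * M.q l y + 1)) (by linarith)
  nlinarith

theorem q_mono {l m : Λ} (h : m ≤ l) (x : X) : M.q m x ≤ M.q l x :=
  nonneg_le_nonneg_of_sq_le_sq (apply_nonneg _ _) (by rw [M.q_sq, M.q_sq]; exact S.p_mono h _)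

end HilbertMod

namespace AdjointPairOn

variable {Λ : Type} [Preorder Λ] {A : Type} [Ring A] [StarRing A] [Algebra ℂ A]
  {S : ProCStar Λ A} {X : Type} [AddCommGroup X] [Module ℂ X] {M : HilbertMod S X}
  {T T' U U' : X → X}

theorem symm (h : AdjointPairOn M T T') : AdjointPairOn M T' T := fun x y => by
  rw [← M.inner_star, ← h, M.inner_star]

theorem sub (hT : AdjointPairOn M T T') (hU : AdjointPairOn M U U') :
    AdjointPairOn M (T - U) (T' - U') := fun x y => by
  simp only [Pi.sub_apply, M.inner_sub_left, M.inner_sub_right, hT x y, hU x y]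

theorem iterate_self (h : AdjointPairOn M T T) (n : ℕ) : AdjointPairOn M T^[n] T^[n] := by
  induction n with
  | zero => exact fun x y => rfl
  | succ n ih =>
    intro x y
    rw [Function.iterate_succ_apply, Function.iterate_succ_apply', ih, h]

theorem q_apply_eq_zero (h : AdjointPairOn M T T') {l : Λ} {x : X} (hx : M.q l x = 0) :
    M.q l (T x) = 0 := by
  have hsq : M.q l (T x) ^ 2 ≤ 0 := calc
    M.q l (T x) ^ 2 = S.p l (M.inner x (T' (T x))) := by rw [sq, M.q_sq, h]
    _ ≤ 4 * M.q l x * M.q l (T' (T x)) := M.p_inner_le l _ _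
    _ = 0 := by rw [hx]; ring
  exact pow_eq_zero_iff two_ne_zero |>.1 (le_antisymm hsq (sq_nonneg _))

end AdjointPairOn

section OperatorSeminorm

variable {Λ : Type} [Preorder Λ] {A : Type} [Ring A] [StarRing A] [Algebra ℂ A]
  {S : ProCStar Λ A} {X : Type} [AddCommGroup X] [Module ℂ X] {M : HilbertMod S X} (l : Λ)

theorem opSemi_nonneg (T : X → X) : 0 ≤ opSemi M l T :=
  Real.sSup_nonneg (by rintro _ ⟨x, -, rfl⟩; exact apply_nonneg _ _)

theorem opSemi_le {T : X → X} {c : ℝ} (hc : 0 ≤ c) (h : ∀ x, M.q l x ≤ 1 → M.q l (T x) ≤ c) :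
    opSemi M l T ≤ c :=
  Real.sSup_le (by rintro _ ⟨x, hx, rfl⟩; exact h x hx) hc

theorem opSemi_eq_zero_of_forall {T : X → X} (h : ∀ x, M.q l (T x) = 0) : opSemi M l T = 0 :=
  le_antisymm (opSemi_le l le_rfl fun x _ => (h x).le) (opSemi_nonneg l T)

theorem opSemi_comp_le {T U : X → X} (hT : ∀ x, M.q l (T x) ≤ opSemi M l T * M.q l x)
    (hU : ∀ x, M.q l (U x) ≤ opSemi M l U * M.q l x) :
    opSemi M l (T ∘ U) ≤ opSemi M l T * opSemi M l U := by
  have hT0 := opSemi_nonneg (M := M) l T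
  have hU0 := opSemi_nonneg (M := M) l U
  refine opSemi_le l (mul_nonneg hT0 hU0) fun x hx => ?_
  calc M.q l (T (U x)) ≤ opSemi M l T * M.q l (U x) := hT _
    _ ≤ opSemi M l T * (opSemi M l U * 1) :=
        mul_le_mul_of_nonneg_left ((hU x).trans (mul_le_mul_of_nonneg_left hx hU0)) hT0
    _ = opSemi M l T * opSemi M l U := by rw [mul_one]

end OperatorSeminorm

/-- Spectral radius argument: `q_m(f^{2ⁿ} x)` is squeezed between `4 (q_m(f x) / 4)^{2ⁿ}` and
`c^{2ⁿ} q_l(x)`. -/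
theorem HilbertMod.q_le_of_adjointPair_self {Λ : Type} [Preorder Λ] {A : Type} [Ring A]
    [StarRing A] [Algebra ℂ A] {S : ProCStar Λ A} {X : Type} [AddCommGroup X] [Module ℂ X]
    (M : HilbertMod S X) {m l : Λ} (hml : m ≤ l) {f : X → X} (hf : AdjointPairOn M f f)
    {c : ℝ} (hc : 0 ≤ c) (hfc : ∀ z, M.q l (f z) ≤ c * M.q l z) {x : X} (hx : M.q m x ≤ 1) :
    M.q m (f x) ≤ 4 * c := by
  have hstep : ∀ n : ℕ, M.q m (f^[2 ^ n] x) * M.q m (f^[2 ^ n] x) ≤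
      4 * M.q m (f^[2 ^ (n + 1)] x) := fun n => calc
    _ = S.p m (M.inner x (f^[2 ^ (n + 1)] x)) := by
      rw [M.q_sq, hf.iterate_self, ← Function.iterate_add_apply, pow_succ, mul_two]
    _ ≤ 4 * M.q m x * M.q m (f^[2 ^ (n + 1)] x) := M.p_inner_le m _ _
    _ ≤ 4 * M.q m (f^[2 ^ (n + 1)] x) := by nlinarith [apply_nonneg (M.q m) (f^[2 ^ (n + 1)] x)]
  have hpow : ∀ n : ℕ, (M.q m (f x) / 4) ^ 2 ^ n ≤ M.q m (f^[2 ^ n] x) / 4 := by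
    intro n
    induction n with
    | zero => simp
    | succ n ih => calc
        (M.q m (f x) / 4) ^ 2 ^ (n + 1) = ((M.q m (f x) / 4) ^ 2 ^ n) ^ 2 := by
          rw [pow_succ, pow_mul]
        _ ≤ (M.q m (f^[2 ^ n] x) / 4) ^ 2 :=
          pow_le_pow_left₀ (by positivity) ih 2
        _ ≤ M.q m (f^[2 ^ (n + 1)] x) / 4 := by nlinarith [hstep n]
  have h := le_of_forall_pow_two_pow_le (Q := M.q l x) hc fun n => calc
    (M.q m (f x) / 4) ^ 2 ^ n ≤ M.q m (f^[2 ^ n] x) / 4 := hpow n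
    _ ≤ M.q m (f^[2 ^ n] x) := by linarith [apply_nonneg (M.q m) (f^[2 ^ n] x)]
    _ ≤ M.q l (f^[2 ^ n] x) := M.q_mono hml _
    _ ≤ c ^ 2 ^ n * M.q l x := apply_iterate_le_pow_mul hc hfc _ x
  linarith

section NormedCarriers

variable {B : Type} [Ring B] [StarRing B] [Algebra ℂ B] (SB : ProCStar PUnit B)
  {Y : Type} [AddCommGroup Y] [Module ℂ Y] (N : HilbertMod SB Y)

/-- Type synonym carrying the norm `p ()`, so that Banach–Steinhaus applies; `HilbertCarrier`
does the same for `q ()`. -/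
def CStarCarrier (_ : ProCStar PUnit B) : Type := B

instance : SeminormedAddCommGroup (CStarCarrier SB) :=
  (SB.p PUnit.unit).toAddGroupSeminorm.toSeminormedAddCommGroup

instance : NormedSpace ℂ (CStarCarrier SB) :=
  { (inferInstance : Module ℂ B) with
    norm_smul_le := fun c (b : B) => (map_smul_eq_mul (SB.p PUnit.unit) c b).le }

def HilbertCarrier (_ : HilbertMod SB Y) : Type := Y

instance : SeminormedAddCommGroup (HilbertCarrier SB N) :=
  (N.q PUnit.unit).toAddGroupSeminorm.toSeminormedAddCommGroup

instance : NormedSpace ℂ (HilbertCarrier SB N) :=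
  { (inferInstance : Module ℂ Y) with
    norm_smul_le := fun c (y : Y) => (map_smul_eq_mul (N.q PUnit.unit) c y).le }

instance : CompleteSpace (HilbertCarrier SB N) := by
  refine Metric.complete_of_cauchySeq_tendsto fun u hu => ?_
  have hCauchy : ∀ (l : PUnit) (ε : ℝ), 0 < ε → ∃ s ∈ Filter.map u Filter.atTop,
      ∀ x ∈ s, ∀ y ∈ s, N.q l (x - y) < ε := by
    intro l ε hε
    obtain ⟨K, hK⟩ := Metric.cauchySeq_iff.1 hu ε hε
    refine ⟨u '' Set.Ici K, Filter.image_mem_map (Filter.Ici_mem_atTop K), ?_⟩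
    rintro _ ⟨i, hi, rfl⟩ _ ⟨j, hj, rfl⟩
    exact (dist_eq_norm (u i) (u j)).symm.trans_lt (hK i hi j hj)
  obtain ⟨x₀, hx₀⟩ := N.complete _ Filter.map_neBot hCauchy
  refine ⟨x₀, Metric.tendsto_atTop.2 fun ε hε => ?_⟩
  obtain ⟨s, hs, h⟩ := hx₀ PUnit.unit ε hε
  obtain ⟨K, hK⟩ := Filter.mem_atTop_sets.1 (Filter.mem_map.1 hs)
  exact ⟨K, fun n hn => (dist_eq_norm _ _).trans_lt (h (u n) (hK n hn))⟩

end NormedCarriers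

noncomputable def HilbertMod.innerCLM {B : Type} [Ring B] [StarRing B] [Algebra ℂ B]
    {SB : ProCStar PUnit B} {Y : Type} [AddCommGroup Y] [Module ℂ Y] (N : HilbertMod SB Y)
    (ξ : Y) : HilbertCarrier SB N →L[ℂ] CStarCarrier SB :=
  LinearMap.mkContinuous
    { toFun := fun η => N.inner ξ η
      map_add' := N.inner_add_right ξ
      map_smul' := fun c η => N.inner_csmul_right c ξ η }
    (4 * N.q PUnit.unit ξ) (fun η => N.p_inner_le PUnit.unit ξ η)

namespace QuotPres

variable {Λ : Type} [Preorder Λ] {A : Type} [Ring A] [StarRing A] [Algebra ℂ A]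
  {S : ProCStar Λ A} {X : Type} [AddCommGroup X] [Module ℂ X] {M : HilbertMod S X}
  {C : Corr S M} {l : Λ}
  {B : Type} [Ring B] [StarRing B] [Algebra ℂ B] {SB : ProCStar PUnit B}
  {Y : Type} [AddCommGroup Y] [Module ℂ Y] {N : HilbertMod SB Y} {D : Corr SB N}
  {piq : A → B} {sig : X → Y} {T T' : X → X}

theorem piq_zero (qp : QuotPres C l SB N D piq sig) : piq 0 = 0 :=
  map_zero (AddMonoidHom.mk' piq qp.piq_add)

theorem sig_zero (qp : QuotPres C l SB N D piq sig) : sig 0 = 0 :=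
  map_zero (AddMonoidHom.mk' sig qp.sig_add)

theorem sig_sub (qp : QuotPres C l SB N D piq sig) (x y : X) : sig (x - y) = sig x - sig y :=
  map_sub (AddMonoidHom.mk' sig qp.sig_add) x y

theorem q_sig (qp : QuotPres C l SB N D piq sig) (x : X) : N.q PUnit.unit (sig x) = M.q l x := by
  rw [← mul_self_inj (apply_nonneg _ _) (apply_nonneg _ _), N.q_sq, M.q_sq, qp.sig_inner,
    qp.piq_norm]

theorem piq_eq_zero_iff (qp : QuotPres C l SB N D piq sig) (a : A) :
    piq a = 0 ↔ S.p l a = 0 := by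
  rw [← qp.piq_norm]
  exact ⟨fun h => by rw [h, map_zero], fun h => SB.separating _ fun _ => h⟩

theorem sig_eq_zero_iff (qp : QuotPres C l SB N D piq sig) (x : X) :
    sig x = 0 ↔ M.q l x = 0 := by
  rw [← qp.q_sig]
  refine ⟨fun h => by rw [h, map_zero], fun h => N.inner_self_eq_zero _ ?_⟩
  exact SB.separating _ fun _ => by rw [← N.q_sq, h, mul_zero]

/-- Uniform boundedness applied to the functionals `⟨T' w, ·⟩` on the Hilbert C*-module `Y`,
`w` in the unit ball. -/
theorem exists_q_apply_le (qp : QuotPres C l SB N D piq sig) (hadj : AdjointPairOn M T T') :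
    ∃ c, 0 ≤ c ∧ ∀ x, M.q l (T x) ≤ c * M.q l x := by
  let g : {w : X // M.q l w ≤ 1} → HilbertCarrier SB N →L[ℂ] CStarCarrier SB :=
    fun w => N.innerCLM (sig (T' w))
  have hg : ∀ w z, ‖g w (sig z)‖ = S.p l (M.inner (T z) w) := fun w z => by
    show SB.p PUnit.unit (N.inner (sig (T' w)) (sig z)) = _
    rw [qp.sig_inner, qp.piq_norm, M.p_inner_comm, ← hadj]
  obtain ⟨c, hc⟩ := banach_steinhaus (g := g) fun η => by
    obtain ⟨z, rfl⟩ := qp.sig_surj η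
    refine ⟨4 * M.q l (T z), fun w => ?_⟩
    rw [hg]
    calc S.p l (M.inner (T z) w) ≤ 4 * M.q l (T z) * M.q l w := M.p_inner_le l _ _
      _ ≤ 4 * M.q l (T z) * 1 := by gcongr; exact w.2
      _ = 4 * M.q l (T z) := mul_one _
  have hc0 : 0 ≤ c := (norm_nonneg _).trans (hc ⟨0, by rw [map_zero]; exact zero_le_one⟩)
  refine ⟨c, hc0, fun x => ?_⟩
  by_cases hTx : M.q l (T x) = 0
  · rw [hTx]
    exact mul_nonneg hc0 (apply_nonneg _ _)
  · have h := (g ⟨_, ((M.q l).apply_inv_smul_self hTx).le⟩).le_of_opNorm_le (hc _) (sig x)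
    rw [hg, M.inner_csmul_right, map_smul_eq_mul, Complex.norm_real,
      Real.norm_of_nonneg (inv_nonneg.2 (apply_nonneg _ _)), ← M.q_sq, ← mul_assoc,
      inv_mul_cancel₀ hTx, one_mul] at h
    exact h.trans_eq (congrArg (c * ·) (qp.q_sig x))

theorem q_apply_le_opSemi_mul (qp : QuotPres C l SB N D piq sig) (hadj : AdjointPairOn M T T')
    (hlin : ∀ (c : ℂ) x, T (c • x) = c • T x) (x : X) :
    M.q l (T x) ≤ opSemi M l T * M.q l x := by
  obtain ⟨c, hc0, hc⟩ := qp.exists_q_apply_le hadj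
  have hbdd : BddAbove ((fun x => M.q l (T x)) '' {x | M.q l x ≤ 1}) := by
    refine ⟨c, ?_⟩
    rintro _ ⟨x, hx, rfl⟩
    exact (hc x).trans (mul_le_of_le_one_right hc0 hx)
  by_cases hx : M.q l x = 0
  · rw [hx, mul_zero, hadj.q_apply_eq_zero hx]
  · have h : M.q l (T ((((M.q l x)⁻¹ : ℝ) : ℂ) • x)) ≤ opSemi M l T :=
      le_csSup hbdd ⟨_, ((M.q l).apply_inv_smul_self hx).le, rfl⟩
    rw [hlin, (M.q l).apply_ofReal_smul (inv_nonneg.2 (apply_nonneg _ _)),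
      inv_mul_le_iff₀ ((apply_nonneg _ _).lt_of_ne (Ne.symm hx))] at h
    rwa [mul_comm]

theorem opSemi_adjoint_le (qp : QuotPres C l SB N D piq sig) (hadj : AdjointPairOn M T T')
    (hlin : ∀ (c : ℂ) x, T (c • x) = c • T x) : opSemi M l T' ≤ 4 * opSemi M l T := by
  have hT0 := opSemi_nonneg (M := M) l T
  refine opSemi_le l (by positivity) fun w hw => ?_
  have h : M.q l (T' w) ^ 2 ≤ 4 * opSemi M l T * M.q l (T' w) := calc
    M.q l (T' w) ^ 2 = S.p l (M.inner (T (T' w)) w) := by rw [sq, M.q_sq, hadj]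
    _ ≤ 4 * M.q l (T (T' w)) * M.q l w := M.p_inner_le l _ _
    _ ≤ 4 * (opSemi M l T * M.q l (T' w)) * 1 := by
      gcongr
      exact qp.q_apply_le_opSemi_mul hadj hlin _
    _ = 4 * opSemi M l T * M.q l (T' w) := by ring
  nlinarith [apply_nonneg (M.q l) (T' w)]

theorem opSemi_le_of_le (qp : QuotPres C l SB N D piq sig) {m : Λ} (hml : m ≤ l)
    (hadj : AdjointPairOn M T T') (hlin : ∀ (c : ℂ) x, T (c • x) = c • T x)
    (hlin' : ∀ (c : ℂ) x, T' (c • x) = c • T' x) : opSemi M m T ≤ 8 * opSemi M l T := by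
  have hc := opSemi_nonneg (M := M) l T
  have hTT : ∀ z, M.q l (T' (T z)) ≤ 4 * opSemi M l T * opSemi M l T * M.q l z := fun z => calc
    M.q l (T' (T z)) ≤ opSemi M l T' * M.q l (T z) := qp.q_apply_le_opSemi_mul hadj.symm hlin' _
    _ ≤ (4 * opSemi M l T) * (opSemi M l T * M.q l z) :=
      mul_le_mul (qp.opSemi_adjoint_le hadj hlin) (qp.q_apply_le_opSemi_mul hadj hlin z)
        (apply_nonneg _ _) (by positivity)
    _ = _ := by ring
  have hself : AdjointPairOn M (T' ∘ T) (T' ∘ T) := fun x y => by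
    show M.inner (T' (T x)) y = M.inner x (T' (T y))
    rw [hadj.symm, hadj]
  refine opSemi_le m (by positivity) fun x hx => ?_
  have h := M.q_le_of_adjointPair_self hml hself (by positivity) hTT hx
  refine nonneg_le_nonneg_of_sq_le_sq (by positivity) ?_
  calc M.q m (T x) * M.q m (T x) = S.p m (M.inner x (T' (T x))) := by rw [M.q_sq, hadj]
    _ ≤ 4 * M.q m x * M.q m (T' (T x)) := M.p_inner_le m _ _
    _ ≤ 4 * 1 * (4 * (4 * opSemi M l T * opSemi M l T)) := by
      gcongr
      exact h
    _ = 8 * opSemi M l T * (8 * opSemi M l T) := by ring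

end QuotPres

section ThetaSpan

variable {Λ : Type} [Preorder Λ] {A : Type} [Ring A] [StarRing A] [Algebra ℂ A]
  {S : ProCStar Λ A} {X : Type} [AddCommGroup X] [Module ℂ X] {M : HilbertMod S X}

theorem smul_thetaOp (c : ℂ) (y x : X) : c • thetaOp M y x = thetaOp M (c • y) x :=
  funext fun _ => (M.csmul_smul' c y _).symm

/-- Induction over `Θ(X)` without a scalar case, which is absorbed by `smul_thetaOp`: without
`StarModule ℂ A` the adjoint of `c • T` cannot be formed from that of `T`. -/
theorem thetaSpan_induction {motive : (X → X) → Prop} (theta : ∀ y x, motive (thetaOp M y x))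
    (zero : motive 0) (add : ∀ f g, motive f → motive g → motive (f + g)) {k : X → X}
    (hk : k ∈ thetaSpan M) : motive k := by
  replace hk : k ∈ (thetaSpan M).toAddSubmonoid := hk
  rw [thetaSpan, Submodule.span_eq_closure] at hk
  induction hk using AddSubmonoid.closure_induction with
  | mem t ht =>
    obtain ⟨c, -, _, ⟨y, x, rfl⟩, rfl⟩ := ht
    show motive (c • thetaOp M y x)
    rw [smul_thetaOp]
    exact theta _ _
  | zero => exact zero
  | add f g _ _ hf hg => exact add f g hf hg

theorem thetaSpan_map_smul {k : X → X} (hk : k ∈ thetaSpan M) (c : ℂ) (u : X) :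
    k (c • u) = c • k u := by
  refine thetaSpan_induction (motive := fun t => t (c • u) = c • t u) (fun y x => ?_)
    (smul_zero c).symm (fun f g hf hg => ?_) hk
  · show M.smul y (M.inner x (c • u)) = c • M.smul y (M.inner x u)
    rw [M.inner_csmul_right, M.smul_csmul']
  · simp only [Pi.add_apply, hf, hg, smul_add]

theorem exists_adjointPair_of_mem_thetaSpan {k : X → X} (hk : k ∈ thetaSpan M) :
    ∃ k' ∈ thetaSpan M, AdjointPairOn M k k' := by
  refine thetaSpan_induction (motive := fun t => ∃ t' ∈ thetaSpan M, AdjointPairOn M t t')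
    (fun y x => ⟨thetaOp M x y, Submodule.subset_span ⟨x, y, rfl⟩, fun u v => ?_⟩)
    ⟨0, zero_mem _, fun u v => ?_⟩ ?_ hk
  · show M.inner (M.smul y (M.inner x u)) v = M.inner u (M.smul x (M.inner y v))
    rw [M.inner_smul_right u x, ← M.inner_star v, M.inner_smul_right v y, star_mul,
      M.inner_star, M.inner_star]
  · show M.inner 0 v = M.inner u 0
    rw [M.inner_zero_left, M.inner_zero_right]
  · rintro f g ⟨f', hf', hf⟩ ⟨g', hg', hg⟩
    refine ⟨f' + g', add_mem hf' hg', fun u v => ?_⟩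
    simp only [Pi.add_apply, M.inner_add_left, M.inner_add_right, hf u v, hg u v]

end ThetaSpan

namespace Corr

variable {Λ : Type} [Preorder Λ] {A : Type} [Ring A] [StarRing A] [Algebra ℂ A]
  {S : ProCStar Λ A} {X : Type} [AddCommGroup X] [Module ℂ X] {M : HilbertMod S X}
  (C : Corr S M)

theorem phi_zero : C.phi 0 = 0 :=
  map_zero (AddMonoidHom.mk' C.phi C.phi_add)

theorem inner_phi_right (b : A) (x z : X) :
    M.inner x (C.phi b z) = M.inner (C.phi (star b) x) z := by
  rw [C.phi_star (star b), star_star]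

theorem phi_sub_map_smul (a : A) {k : X → X} (hk : k ∈ thetaSpan M) (c : ℂ) (x : X) :
    (C.phi a - k) (c • x) = c • (C.phi a - k) x := by
  simp only [Pi.sub_apply, (C.phi_adj a).2.1, thetaSpan_map_smul hk, smul_sub]

theorem comp_phi_mem_thetaSpan {k : X → X} (hk : k ∈ thetaSpan M) (b : A) :
    k ∘ C.phi b ∈ thetaSpan M := by
  refine thetaSpan_induction (motive := fun t => t ∘ C.phi b ∈ thetaSpan M) (fun y x => ?_)
    (zero_mem _) (fun f g hf hg => add_mem hf hg) hk
  have h : thetaOp M y x ∘ C.phi b = thetaOp M y (C.phi (star b) x) := funext fun z => by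
    show M.smul y (M.inner x (C.phi b z)) = M.smul y (M.inner (C.phi (star b) x) z)
    rw [C.inner_phi_right]
  rw [h]
  exact Submodule.subset_span ⟨_, _, rfl⟩

theorem phi_star_eq_zero {a : A} (h : C.phi a = 0) : C.phi (star a) = 0 :=
  funext fun η => M.inner_self_eq_zero _ <| by
    rw [← C.phi_star a, h, Pi.zero_apply, M.inner_zero_left]

theorem eq_zero_of_mem_katsuraIdeal {a : A} (ha : a ∈ KatsuraIdeal C) (h : C.phi a = 0) :
    a = 0 := by
  have hperp : a * star a = 0 := ha.2 _ (C.phi_star_eq_zero h)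
  refine S.separating a fun l => ?_
  have hl := S.p_cstar l (star a)
  rw [star_star, hperp, map_zero, S.p_star] at hl
  exact mul_self_eq_zero.1 hl.symm

theorem zero_mem_Jlevel (l : Λ) : (0 : A) ∈ Jlevel C l := by
  refine ⟨fun ε hε => ⟨0, zero_mem _, ?_⟩, fun b _ => by rw [zero_mul, map_zero]⟩
  rwa [C.phi_zero, sub_zero, opSemi_eq_zero_of_forall (T := 0) l fun _ => map_zero _]

theorem zero_mem_XinvIdeal {I : Set A} (h : (0 : A) ∈ I) : (0 : A) ∈ XinvIdeal C I :=
  fun x y => by rwa [C.phi_zero, Pi.zero_apply, M.inner_zero_right]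

theorem mul_mem_XinvIdeal {I : Set A} (a : A) {b : A} (hb : b ∈ XinvIdeal C I) :
    a * b ∈ XinvIdeal C I :=
  fun x y => by
    rw [C.phi_mul, C.inner_phi_right]
    exact hb x _

theorem mem_XinvIdeal_kerSeminorm_iff {l : Λ} {a : A} :
    a ∈ XinvIdeal C (kerSeminorm S l) ↔ ∀ x, M.q l (C.phi a x) = 0 := by
  refine ⟨fun h x => mul_self_eq_zero.1 ?_, fun h x y => ?_⟩
  · rw [M.q_sq]
    exact h x (C.phi a x)
  · refine le_antisymm ?_ (apply_nonneg _ _)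
    calc S.p l (M.inner y (C.phi a x)) ≤ 4 * M.q l y * M.q l (C.phi a x) := M.p_inner_le l _ _
      _ = 0 := by rw [h x, mul_zero]

end Corr

namespace QuotPres

variable {Λ : Type} [Preorder Λ] {A : Type} [Ring A] [StarRing A] [Algebra ℂ A]
  {S : ProCStar Λ A} {X : Type} [AddCommGroup X] [Module ℂ X] {M : HilbertMod S X}
  {C : Corr S M} {l : Λ}
  {B : Type} [Ring B] [StarRing B] [Algebra ℂ B] {SB : ProCStar PUnit B}
  {Y : Type} [AddCommGroup Y] [Module ℂ Y] {N : HilbertMod SB Y} {D : Corr SB N}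
  {piq : A → B} {sig : X → Y}

theorem opSemi_eq (qp : QuotPres C l SB N D piq sig) {T : X → X} {T' : Y → Y}
    (hcomm : ∀ x, T' (sig x) = sig (T x)) : opSemi N PUnit.unit T' = opSemi M l T := by
  have hball : sig '' {x | M.q l x ≤ 1} = {η | N.q PUnit.unit η ≤ 1} := by
    ext η
    obtain ⟨x, rfl⟩ := qp.sig_surj η
    refine ⟨?_, fun hx => ⟨x, by rwa [Set.mem_ofPred_eq, ← qp.q_sig], rfl⟩⟩
    rintro ⟨x', hx', hxx'⟩
    rwa [Set.mem_ofPred_eq, ← hxx', qp.q_sig]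
  rw [opSemi, opSemi, ← hball, Set.image_image]
  simp only [hcomm, qp.q_sig]

theorem exists_thetaSpan_quot (qp : QuotPres C l SB N D piq sig) {k : X → X}
    (hk : k ∈ thetaSpan M) : ∃ k' ∈ thetaSpan N, ∀ x, k' (sig x) = sig (k x) := by
  refine thetaSpan_induction (motive := fun t => ∃ t' ∈ thetaSpan N, ∀ x, t' (sig x) = sig (t x))
    (fun y x => ⟨thetaOp N (sig y) (sig x), Submodule.subset_span ⟨_, _, rfl⟩, fun z => ?_⟩)
    ⟨0, zero_mem _, fun _ => qp.sig_zero.symm⟩ ?_ hk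
  · show N.smul (sig y) (N.inner (sig x) (sig z)) = sig (M.smul y (M.inner x z))
    rw [qp.sig_inner, qp.sig_smul]
  · rintro f g ⟨f', hf', hf⟩ ⟨g', hg', hg⟩
    exact ⟨f' + g', add_mem hf' hg', fun x => by simp only [Pi.add_apply, hf, hg, qp.sig_add]⟩

theorem exists_thetaSpan_lift (qp : QuotPres C l SB N D piq sig) {k' : Y → Y}
    (hk' : k' ∈ thetaSpan N) : ∃ k ∈ thetaSpan M, ∀ x, k' (sig x) = sig (k x) := by
  refine thetaSpan_induction (motive := fun t => ∃ t' ∈ thetaSpan M, ∀ x, t (sig x) = sig (t' x))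
    (fun η ξ => ?_) ⟨0, zero_mem _, fun _ => qp.sig_zero.symm⟩ ?_ hk'
  · obtain ⟨y, rfl⟩ := qp.sig_surj η
    obtain ⟨x, rfl⟩ := qp.sig_surj ξ
    refine ⟨thetaOp M y x, Submodule.subset_span ⟨_, _, rfl⟩, fun z => ?_⟩
    show N.smul (sig y) (N.inner (sig x) (sig z)) = sig (M.smul y (M.inner x z))
    rw [qp.sig_inner, qp.sig_smul]
  · rintro f g ⟨f', hf', hf⟩ ⟨g', hg', hg⟩
    exact ⟨f' + g', add_mem hf' hg', fun x => by simp only [Pi.add_apply, hf, hg, qp.sig_add]⟩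

theorem memKlevel_iff (qp : QuotPres C l SB N D piq sig) (a : A) :
    memKlevel M l (C.phi a) ↔ memKlevel N PUnit.unit (D.phi (piq a)) := by
  have hcomm : ∀ {k : X → X} {k' : Y → Y}, (∀ x, k' (sig x) = sig (k x)) →
      ∀ x, (D.phi (piq a) - k') (sig x) = sig ((C.phi a - k) x) := fun h x => by
    simp only [Pi.sub_apply, qp.phi_comm, h, qp.sig_sub]
  constructor
  · intro h ε hε
    obtain ⟨k, hk, hlt⟩ := h ε hε
    obtain ⟨k', hk', hkk'⟩ := qp.exists_thetaSpan_quot hk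
    exact ⟨k', hk', (qp.opSemi_eq (hcomm hkk')).trans_lt hlt⟩
  · intro h ε hε
    obtain ⟨k', hk', hlt⟩ := h ε hε
    obtain ⟨k, hk, hkk'⟩ := qp.exists_thetaSpan_lift hk'
    exact ⟨k, hk, (qp.opSemi_eq (hcomm hkk')).symm.trans_lt hlt⟩

theorem phi_piq_eq_zero_iff (qp : QuotPres C l SB N D piq sig) (b : A) :
    D.phi (piq b) = 0 ↔ ∀ x, M.q l (C.phi b x) = 0 := by
  rw [funext_iff, qp.sig_surj.forall]
  simp only [Pi.zero_apply, qp.phi_comm, qp.sig_eq_zero_iff]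

theorem opSemi_phi_eq_zero_iff (qp : QuotPres C l SB N D piq sig) (b : A) :
    opSemi M l (C.phi b) = 0 ↔ ∀ x, M.q l (C.phi b x) = 0 := by
  refine ⟨fun h x => le_antisymm ?_ (apply_nonneg _ _), opSemi_eq_zero_of_forall l⟩
  simpa [h] using qp.q_apply_le_opSemi_mul (C.phi_star b) (C.phi_adj b).2.1 x

theorem piq_mem_katsuraIdeal_iff (qp : QuotPres C l SB N D piq sig) (a : A) :
    piq a ∈ KatsuraIdeal D ↔ a ∈ Jlevel C l := by
  have hker : ∀ b, D.phi (piq b) = 0 ↔ opSemi M l (C.phi b) = 0 := fun b =>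
    (qp.phi_piq_eq_zero_iff b).trans (qp.opSemi_phi_eq_zero_iff b).symm
  constructor
  · rintro ⟨⟨-, hK⟩, hperp⟩
    refine ⟨(qp.memKlevel_iff a).2 (hK PUnit.unit), fun b hb => ?_⟩
    rw [← qp.piq_eq_zero_iff, qp.piq_mul]
    exact hperp _ ((hker b).2 hb)
  · rintro ⟨hK, hperp⟩
    refine ⟨⟨D.phi_adj _, fun _ => (qp.memKlevel_iff a).1 hK⟩, fun β hβ => ?_⟩
    obtain ⟨b, rfl⟩ := qp.piq_surj β
    rw [← qp.piq_mul, qp.piq_eq_zero_iff]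
    exact hperp b ((hker b).1 hβ)

theorem memKlevel_of_le (qp : QuotPres C l SB N D piq sig) {m : Λ} (hml : m ≤ l) {a : A}
    (h : memKlevel M l (C.phi a)) : memKlevel M m (C.phi a) := by
  intro ε hε
  obtain ⟨k, hk, hlt⟩ := h (ε / 8) (by positivity)
  obtain ⟨k', hk', hkk'⟩ := exists_adjointPair_of_mem_thetaSpan hk
  refine ⟨k, hk, ?_⟩
  calc opSemi M m (C.phi a - k) ≤ 8 * opSemi M l (C.phi a - k) :=
        qp.opSemi_le_of_le hml ((C.phi_star a).sub hkk') (C.phi_sub_map_smul a hk)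
          (C.phi_sub_map_smul (star a) hk')
    _ < ε := by linarith

theorem memKlevel_mul_right (qp : QuotPres C l SB N D piq sig) {a : A}
    (h : memKlevel M l (C.phi a)) (b : A) : memKlevel M l (C.phi (a * b)) := by
  intro ε hε
  have hb0 := opSemi_nonneg (M := M) l (C.phi b)
  obtain ⟨k, hk, hlt⟩ := h (ε / (opSemi M l (C.phi b) + 1)) (by positivity)
  obtain ⟨k', -, hkk'⟩ := exists_adjointPair_of_mem_thetaSpan hk
  refine ⟨k ∘ C.phi b, C.comp_phi_mem_thetaSpan hk b, ?_⟩
  have hfac : C.phi (a * b) - k ∘ C.phi b = (C.phi a - k) ∘ C.phi b :=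
    funext fun x => by simp only [Pi.sub_apply, Function.comp_apply, C.phi_mul]
  rw [hfac]
  calc opSemi M l ((C.phi a - k) ∘ C.phi b)
      ≤ opSemi M l (C.phi a - k) * opSemi M l (C.phi b) :=
        opSemi_comp_le l
          (qp.q_apply_le_opSemi_mul ((C.phi_star a).sub hkk') (C.phi_sub_map_smul a hk))
          (qp.q_apply_le_opSemi_mul (C.phi_star b) (C.phi_adj b).2.1)
    _ ≤ ε / (opSemi M l (C.phi b) + 1) * opSemi M l (C.phi b) := by gcongr
    _ < ε := by
      rw [div_mul_eq_mul_div, div_lt_iff₀ (by positivity)]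
      nlinarith

theorem mul_mem_Jlevel (qp : QuotPres C l SB N D piq sig) {a : A} (ha : a ∈ Jlevel C l)
    (b : A) : a * b ∈ Jlevel C l := by
  refine ⟨qp.memKlevel_mul_right ha.1 b, fun c hc => ?_⟩
  rw [mul_assoc]
  refine ha.2 _ ((qp.opSemi_phi_eq_zero_iff _).2 fun x => ?_)
  rw [C.phi_mul]
  exact (C.phi_star b).q_apply_eq_zero ((qp.opSemi_phi_eq_zero_iff c).1 hc x)

end QuotPres

theorem stmt_9_general {Λ : Type} [Preorder Λ]
    {A : Type} [Ring A] [StarRing A] [Algebra ℂ A] {S : ProCStar Λ A}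
    {X : Type} [AddCommGroup X] [Module ℂ X] {M : HilbertMod S X}
    (C : Corr S M)
    -- quotient presentations of the correspondences (X_λ, A_λ, φ_{X_λ})
    (B : Λ → Type) [∀ l, Ring (B l)] [∀ l, StarRing (B l)] [∀ l, Algebra ℂ (B l)]
    (SB : ∀ l, ProCStar PUnit (B l))
    (Y : Λ → Type) [∀ l, AddCommGroup (Y l)] [∀ l, Module ℂ (Y l)]
    (N : ∀ l, HilbertMod (SB l) (Y l)) (D : ∀ l, Corr (SB l) (N l))
    (piq : ∀ l, A → B l) (sig : ∀ l, X → Y l)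
    (qp : ∀ l, QuotPres C l (SB l) (N l) (D l) (piq l) (sig l))
    -- the connecting morphisms π_{λμ}^A
    (piDown : ∀ l m : Λ, m ≤ l → B l → B m)
    (hpiDown : ∀ (l m : Λ) (h : m ≤ l) (a : A), piDown l m h (piq l a) = piq m a) :
    ((∀ l m : Λ, m ≤ l →
        piq m '' Jlevel C l ∩ piq m '' XinvIdeal C (kerSeminorm S m) = {0}) ↔
      (∀ (l m : Λ) (h : m ≤ l),
        piDown l m h '' KatsuraIdeal (D l) ⊆ KatsuraIdeal (D m))) := by
  constructor
  · intro h1 l m hml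
    rintro _ ⟨β, hβ, rfl⟩
    obtain ⟨a, rfl⟩ := (qp l).piq_surj β
    have ha := ((qp l).piq_mem_katsuraIdeal_iff a).1 hβ
    rw [hpiDown, (qp m).piq_mem_katsuraIdeal_iff]
    refine ⟨(qp l).memKlevel_of_le hml ha.1, fun b hb => ?_⟩
    have hb' : b ∈ XinvIdeal C (kerSeminorm S m) :=
      C.mem_XinvIdeal_kerSeminorm_iff.2 (((qp m).opSemi_phi_eq_zero_iff b).1 hb)
    have hab : piq m (a * b) ∈ piq m '' Jlevel C l ∩ piq m '' XinvIdeal C (kerSeminorm S m) :=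
      ⟨⟨_, (qp l).mul_mem_Jlevel ha b, rfl⟩, ⟨_, C.mul_mem_XinvIdeal a hb', rfl⟩⟩
    rw [h1 l m hml] at hab
    exact ((qp m).piq_eq_zero_iff _).1 hab
  · intro h2 l m hml
    refine Set.eq_singleton_iff_unique_mem.2 ⟨⟨⟨0, C.zero_mem_Jlevel l, (qp m).piq_zero⟩,
      ⟨0, C.zero_mem_XinvIdeal (map_zero _), (qp m).piq_zero⟩⟩, ?_⟩
    rintro _ ⟨⟨a, ha, rfl⟩, a', ha', heq⟩
    refine (D m).eq_zero_of_mem_katsuraIdeal ?_ ?_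
    · rw [← hpiDown l m hml]
      exact h2 l m hml ⟨_, ((qp l).piq_mem_katsuraIdeal_iff a).2 ha, rfl⟩
    · rw [← heq]
      exact ((qp m).phi_piq_eq_zero_iff a').2 (C.mem_XinvIdeal_kerSeminorm_iff.1 ha')

/-- For an inverse limit pro-C*-correspondence `(X, A, φ_X)`
the following are equivalent:
(1) `π_μ^A(J_X^λ) ∩ π_μ^A(X⁻¹(ker p_μ)) = {0}` for all `μ ≤ λ`;
(2) `π_{λμ}^A(J_{X_λ}) ⊆ J_{X_μ}` for all `μ ≤ λ`. -/
theorem stmt_9 {Λ : Type} [Preorder Λ] [Nonempty Λ] [IsDirected Λ (· ≤ ·)]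
    {A : Type} [Ring A] [StarRing A] [Algebra ℂ A] {S : ProCStar Λ A}
    {X : Type} [AddCommGroup X] [Module ℂ X] {M : HilbertMod S X}
    (C : Corr S M) (hC : IsInvLimCorr C)
    -- quotient presentations of the correspondences (X_λ, A_λ, φ_{X_λ})
    (B : Λ → Type) [∀ l, Ring (B l)] [∀ l, StarRing (B l)] [∀ l, Algebra ℂ (B l)]
    (SB : ∀ l, ProCStar PUnit (B l))
    (Y : Λ → Type) [∀ l, AddCommGroup (Y l)] [∀ l, Module ℂ (Y l)]
    (N : ∀ l, HilbertMod (SB l) (Y l)) (D : ∀ l, Corr (SB l) (N l))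
    (piq : ∀ l, A → B l) (sig : ∀ l, X → Y l)
    (qp : ∀ l, QuotPres C l (SB l) (N l) (D l) (piq l) (sig l))
    -- the connecting morphisms π_{λμ}^A
    (piDown : ∀ l m : Λ, m ≤ l → B l → B m)
    (hpiDown : ∀ (l m : Λ) (h : m ≤ l) (a : A), piDown l m h (piq l a) = piq m a) :
    ((∀ l m : Λ, m ≤ l →
        piq m '' Jlevel C l ∩ piq m '' XinvIdeal C (kerSeminorm S m) = {0}) ↔
      (∀ (l m : Λ) (h : m ≤ l),
        piDown l m h '' KatsuraIdeal (D l) ⊆ KatsuraIdeal (D m))) :=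
  stmt_9_general C B SB Y N D piq sig qp piDown hpiDown
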